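/- arXiv:2003.12308 — 5 statements merged into one kernel-verified Lean document; each statement's English description precedes it below -/
import Mathlib

section
/- Let n ≥ 2 be even, let 1 ≤ m ≤ n/2, and let F, F' : 𝔽₂ⁿ → 𝔽₂ᵐ be bent functions. Then F and F' are extended-affine equivalent if and only if their addition designs 𝔻(F) and 𝔻(F') are isomorphic, i.e. if and only if there exists a bijection π : 𝔽₂ⁿ → 𝔽₂ⁿ such that 𝓑(F) = { π(B) : B ∈ 𝓑(F') }. -/
open Finset Function

/-- The vector space `𝔽₂ⁿ`. -/
abbrev BV (n : ℕ) := Fin n → ZMod 2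

/-- The standard dot product `⟨u,v⟩ = Σᵢ uᵢ vᵢ` on `𝔽₂ⁿ`. -/
def bdot {n : ℕ} (u v : BV n) : ZMod 2 := ∑ i, u i * v i

/-- The Walsh coefficient `W_F(a,b) = Σ_x (−1)^{⟨b,F(x)⟩ ⊕ ⟨a,x⟩}` of an `(n,m)`-function. -/
def walsh {n m : ℕ} (F : BV n → BV m) (a : BV n) (b : BV m) : ℤ :=
  ∑ x : BV n, (-1 : ℤ) ^ ((bdot b (F x) + bdot a x).val)

/-- An `(n,m)`-function is bent if all Walsh coefficients `W_F(a,b)`, `b ≠ 0`, equal `±2^{n/2}`. -/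
def IsBent {n m : ℕ} (F : BV n → BV m) : Prop :=
  ∀ (a : BV n) (b : BV m), b ≠ 0 →
    walsh F a b = 2 ^ (n / 2) ∨ walsh F a b = -2 ^ (n / 2)

/-- A map `𝔽₂ⁿ → 𝔽₂ᵐ` is affine if it is a linear map followed by a translation. -/
def IsAffineF {n m : ℕ} (A : BV n → BV m) : Prop :=
  ∃ (L : BV n →ₗ[ZMod 2] BV m) (t : BV m), ∀ x, A x = L x + t

/-- Extended-affine equivalence of `(n,m)`-functions: `F = A₁ ∘ F' ∘ A₂ + A₃` with `A₁`
a linear automorphism of `𝔽₂ᵐ`, `A₂` an affine automorphism of `𝔽₂ⁿ`, `A₃` affine. -/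
def EAequiv {n m : ℕ} (F F' : BV n → BV m) : Prop :=
  ∃ (A₁ : BV m →ₗ[ZMod 2] BV m) (A₂ : BV n → BV n) (A₃ : BV n → BV m),
    Bijective A₁ ∧ IsAffineF A₂ ∧ Bijective A₂ ∧ IsAffineF A₃ ∧
    ∀ x, F x = A₁ (F' (A₂ x)) + A₃ x

/-- A codeword of the code `C(F)`: `x ↦ ε ⊕ ⟨a,x⟩ ⊕ ⟨b,F(x)⟩`. -/
def codeword {n m : ℕ} (F : BV n → BV m) (ε : ZMod 2) (a : BV n) (b : BV m) :
    BV n → ZMod 2 :=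
  fun x => ε + bdot a x + bdot b (F x)

/-- The linear code `C(F) = { x ↦ ε ⊕ ⟨a,x⟩ ⊕ ⟨b,F(x)⟩ }` of length `2ⁿ`. -/
def code {n m : ℕ} (F : BV n → BV m) : Set (BV n → ZMod 2) :=
  { c | ∃ (ε : ZMod 2) (a : BV n) (b : BV m), c = codeword F ε a b }

/-- The weight of a codeword: the size of its support. -/
def wtc {n : ℕ} (c : BV n → ZMod 2) : ℕ :=
  (Finset.univ.filter (fun x => c x = 1)).card

/-- The block set `𝓑(F)` of the addition design `𝔻(F)`: supports of codewords of `C(F)` of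
minimum weight `2^{n−1} − 2^{n/2−1}`. -/
def blocks {n m : ℕ} (F : BV n → BV m) : Set (Set (BV n)) :=
  { B | ∃ c ∈ code F, wtc c = 2 ^ (n - 1) - 2 ^ (n / 2 - 1) ∧ B = { x | c x = 1 } }

/-!
For a bent `F`, a codeword `x ↦ ε + ⟨a,x⟩ + ⟨b,F x⟩` has character sum `(-1)^ε W_F(a,b)`, so it
has minimum weight `2^{n-1} - 2^{n/2-1}` exactly when `b ≠ 0` and `(-1)^ε W_F(a,b) = 2^{n/2}`.
These words span `C(F)`: differences of two of them give the affine functions up to a constant,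
and the constant `1` is obtained as well because the dual `a ↦ ε(a)` of a bent component is never
affine (Walsh inversion). Hence an isomorphism `π` of addition designs is exactly a permutation
with `C(F) = C(F') ∘ π⁻¹`.

Such a permutation `σ` with `C(F) = C(F') ∘ σ` is affine: its coordinates are balanced codewords
of `C(F)`, while a codeword with `b ≠ 0` has character sum `±2^{n/2}`. Writing each component
`⟨b,F⟩` as an affine function plus a component `⟨β b, F' ∘ σ⟩` defines an additive map `β`,
which is injective because no component of a bent function is affine; its transpose is the
linear part `A₁` of an EA equivalence. Conversely an EA equivalence `F = A₁ ∘ F' ∘ A₂ + A₃`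
gives `C(F) = C(F') ∘ A₂`.
-/

section Characters
variable {n m : ℕ}

def sgn (u : ZMod 2) : ℤ := (-1) ^ u.val

@[simp] lemma sgn_zero : sgn 0 = 1 := rfl

@[simp] lemma sgn_one : sgn 1 = -1 := rfl

lemma sgn_add (u v : ZMod 2) : sgn (u + v) = sgn u * sgn v := by revert u v; decide

lemma sgn_sub (u v : ZMod 2) : sgn (u - v) = sgn u * sgn v := by revert u v; decide

lemma sgn_mul_self (u : ZMod 2) : sgn u * sgn u = 1 := by revert u; decide

lemma abs_sgn (u : ZMod 2) : |sgn u| = 1 := by revert u; decide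

lemma sgn_ne_zero (u : ZMod 2) : sgn u ≠ 0 := by revert u; decide

lemma sgn_eq_one_sub_two_mul (u : ZMod 2) : sgn u = 1 - 2 * if u = 1 then 1 else 0 := by
  revert u; decide

lemma bdot_eq_dotProduct (u v : BV n) : bdot u v = u ⬝ᵥ v := rfl

lemma bdot_comm (u v : BV n) : bdot u v = bdot v u := dotProduct_comm u v

@[simp] lemma bdot_zero_left (v : BV n) : bdot 0 v = 0 := zero_dotProduct v

lemma bdot_add_left (u u' v : BV n) : bdot (u + u') v = bdot u v + bdot u' v :=
  add_dotProduct u u' v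

lemma bdot_sub_left (u u' v : BV n) : bdot (u - u') v = bdot u v - bdot u' v :=
  sub_dotProduct u u' v

lemma bdot_add_right (u v v' : BV n) : bdot u (v + v') = bdot u v + bdot u v' :=
  dotProduct_add u v v'

lemma bdot_sub_right (u v v' : BV n) : bdot u (v - v') = bdot u v - bdot u v' :=
  dotProduct_sub u v v'

@[simp] lemma bdot_single_one_left (i : Fin n) (v : BV n) : bdot (Pi.single i 1) v = v i := by
  simp [bdot_eq_dotProduct]

lemma exists_bdot_eq (L : Module.Dual (ZMod 2) (BV n)) : ∃ u, ∀ x, L x = bdot u x :=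
  ⟨(dotProductEquiv (ZMod 2) (Fin n)).symm L, fun x => by
    conv_lhs => rw [← (dotProductEquiv (ZMod 2) (Fin n)).apply_symm_apply L]
    rfl⟩

lemma card_BV : Fintype.card (BV n) = 2 ^ n := by simp

lemma two_pow_div_two_lt (hn : 0 < n) : (2 : ℤ) ^ (n / 2) < 2 ^ n :=
  pow_lt_pow_right₀ one_lt_two (by omega)

lemma sum_sgn_bdot (u : BV n) : ∑ x, sgn (bdot u x) = if u = 0 then 2 ^ n else 0 := by
  split_ifs with hu
  · simp [hu]
  obtain ⟨i, hi⟩ := Function.ne_iff.1 hu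
  have hui : u i = 1 := (by decide : ∀ t : ZMod 2, t ≠ 0 → t = 1) _ hi
  -- translating by `eᵢ` flips every sign
  have hneg : ∑ x, sgn (bdot u x) = -∑ x, sgn (bdot u x) := by
    calc ∑ x, sgn (bdot u x) = ∑ x, sgn (bdot u (x + Pi.single i 1)) :=
          (Equiv.sum_comp (Equiv.addRight (Pi.single i 1)) (fun x => sgn (bdot u x))).symm
      _ = -∑ x, sgn (bdot u x) := by
          simp only [bdot_add_right, bdot_comm u (Pi.single i 1), bdot_single_one_left, hui,
            sgn_add, sgn_one, mul_neg_one, Finset.sum_neg_distrib]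
  linarith

lemma sum_sgn_eq_two_pow_sub_wtc (c : BV n → ZMod 2) :
    ∑ x, sgn (c x) = 2 ^ n - 2 * (wtc c : ℤ) := by
  simp only [sgn_eq_one_sub_two_mul, Finset.sum_sub_distrib, ← Finset.mul_sum, Finset.sum_boole]
  simp [wtc]

lemma walsh_eq_sum_sgn (F : BV n → BV m) (a : BV n) (b : BV m) :
    walsh F a b = ∑ x, sgn (bdot b (F x) + bdot a x) := rfl

lemma sum_sgn_codeword (F : BV n → BV m) (ε : ZMod 2) (a : BV n) (b : BV m) :
    ∑ x, sgn (codeword F ε a b x) = sgn ε * walsh F a b := by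
  rw [walsh_eq_sum_sgn, Finset.mul_sum]
  exact Finset.sum_congr rfl fun x _ => by rw [codeword, add_assoc, add_comm (bdot a x), sgn_add]

lemma sum_walsh_mul_sgn_bdot (F : BV n → BV m) (b : BV m) (x : BV n) :
    ∑ a, walsh F a b * sgn (bdot a x) = 2 ^ n * sgn (bdot b (F x)) := by
  have hinner : ∀ y : BV n, ∑ a : BV n, sgn (bdot a (y - x)) = if y = x then 2 ^ n else 0 := by
    intro y
    simp_rw [bdot_comm _ (y - x), sum_sgn_bdot, sub_eq_zero]
  calc ∑ a, walsh F a b * sgn (bdot a x)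
      = ∑ y, sgn (bdot b (F y)) * ∑ a : BV n, sgn (bdot a (y - x)) := by
        simp_rw [walsh_eq_sum_sgn, Finset.sum_mul, Finset.mul_sum]
        rw [Finset.sum_comm]
        refine Finset.sum_congr rfl fun y _ => Finset.sum_congr rfl fun a _ => ?_
        rw [bdot_sub_right, sgn_add, sgn_sub, mul_assoc]
    _ = 2 ^ n * sgn (bdot b (F x)) := by simp [hinner, mul_comm]

end Characters

section MinimumWeightWords
variable {n m : ℕ}

def minWeightWords (F : BV n → BV m) : Set (BV n → ZMod 2) :=
  { c | c ∈ code F ∧ wtc c = 2 ^ (n - 1) - 2 ^ (n / 2 - 1) }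

lemma codeword_mem_minWeightWords_iff (hn : 2 ≤ n) (F : BV n → BV m) (ε : ZMod 2) (a : BV n)
    (b : BV m) : codeword F ε a b ∈ minWeightWords F ↔ sgn ε * walsh F a b = 2 ^ (n / 2) := by
  have hwt := sum_sgn_eq_two_pow_sub_wtc (codeword F ε a b)
  rw [sum_sgn_codeword] at hwt
  have hle : 2 ^ (n / 2 - 1) ≤ 2 ^ (n - 1) := Nat.pow_le_pow_right two_pos (by omega)
  have h₁ : (2 : ℤ) ^ n = 2 * 2 ^ (n - 1) := by rw [← pow_succ']; congr 1; omega
  have h₂ : (2 : ℤ) ^ (n / 2) = 2 * 2 ^ (n / 2 - 1) := by rw [← pow_succ']; congr 1; omega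
  have hmem : codeword F ε a b ∈ code F := ⟨ε, a, b, rfl⟩
  simp only [minWeightWords, Set.mem_ofPred_eq, hmem, true_and]
  zify [hle]
  constructor <;> intro h <;> linarith

lemma IsBent.exists_codeword_mem_minWeightWords {F : BV n → BV m} (hF : IsBent F) (hn : 2 ≤ n)
    (a : BV n) {b : BV m} (hb : b ≠ 0) : ∃ ε, codeword F ε a b ∈ minWeightWords F := by
  simp only [codeword_mem_minWeightWords_iff hn]
  rcases hF a b hb with h | h
  · exact ⟨0, by simp [h]⟩
  · exact ⟨1, by simp [h]⟩

lemma exists_walsh_ne_mul_sgn (hn : 0 < n) (F : BV n → BV m) (b : BV m) (c : ℤ) (δ : ZMod 2)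
    (u : BV n) : ∃ a, walsh F a b ≠ c * sgn (δ + bdot u a) := by
  by_contra! h
  set x : BV n := u + Pi.single ⟨0, hn⟩ 1
  have hux : u - x ≠ 0 := by simp [x, Pi.single_eq_zero_iff]
  have hterm : ∀ a,
      c * sgn (δ + bdot u a) * sgn (bdot a x) = c * sgn δ * sgn (bdot (u - x) a) := by
    intro a
    rw [sgn_add, bdot_sub_left, sgn_sub, bdot_comm a x]
    ring
  have hinv := sum_walsh_mul_sgn_bdot F b x
  simp only [h, hterm, ← Finset.mul_sum, sum_sgn_bdot, if_neg hux, mul_zero] at hinv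
  exact mul_ne_zero (by positivity) (sgn_ne_zero _) hinv.symm


lemma exists_map_add_ne_of_sgn_mul_walsh_eq (hn : 0 < n) {F : BV n → BV m} {b : BV m} {c : ℤ}
    {e : BV n → ZMod 2} (he : ∀ a, sgn (e a) * walsh F a b = c) :
    ∃ a₁ a₂, e (a₁ + a₂) ≠ e a₁ + e a₂ - e 0 := by
  by_contra! hadd
  let g : BV n →+ ZMod 2 :=
    AddMonoidHom.mk' (fun a => e a - e 0) fun a₁ a₂ => by simp only [hadd]; ring
  obtain ⟨u, hu⟩ := exists_bdot_eq (g.toZModLinearMap 2)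
  obtain ⟨a, ha⟩ := exists_walsh_ne_mul_sgn hn F b c (e 0) u
  refine ha ?_
  have hea : e a = e 0 + bdot u a := by
    rw [← hu a]
    change e a = e 0 + (e a - e 0)
    ring
  rw [← hea, ← he a, mul_comm, ← mul_assoc, sgn_mul_self, one_mul]

def codewordMap (F : BV n → BV m) : ZMod 2 × BV n × BV m →ₗ[ZMod 2] (BV n → ZMod 2) where
  toFun p := codeword F p.1 p.2.1 p.2.2
  map_add' p q := by
    funext x
    simp only [codeword, Prod.fst_add, Prod.snd_add, bdot_add_left, Pi.add_apply]
    ring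
  map_smul' r p := by
    funext x
    simp only [codeword, Prod.smul_fst, Prod.smul_snd, bdot_eq_dotProduct, smul_dotProduct,
      Pi.smul_apply, smul_eq_mul, RingHom.id_apply]
    ring

lemma codewordMap_apply (F : BV n → BV m) (p : ZMod 2 × BV n × BV m) :
    codewordMap F p = codeword F p.1 p.2.1 p.2.2 := rfl

lemma coe_range_codewordMap (F : BV n → BV m) :
    (LinearMap.range (codewordMap F) : Set (BV n → ZMod 2)) = code F := by
  ext c
  simp [code, codewordMap_apply, eq_comm]

lemma IsBent.span_minWeightWords {F : BV n → BV m} (hF : IsBent F) (hn : 2 ≤ n) (hm : 0 < m) :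
    Submodule.span (ZMod 2) (minWeightWords F) = LinearMap.range (codewordMap F) := by
  set S := Submodule.span (ZMod 2) (minWeightWords F)
  refine le_antisymm (Submodule.span_le.2 fun c hc => (coe_range_codewordMap F).symm ▸ hc.1) ?_
  have hmin : ∀ a {b : BV m}, b ≠ 0 → ∃ ε, codewordMap F (ε, a, b) ∈ S := fun a _ hb =>
    (hF.exists_codeword_mem_minWeightWords hn a hb).imp fun _ h => Submodule.subset_span h
  set b₀ : BV m := Pi.single ⟨0, hm⟩ 1
  have hb₀ : b₀ ≠ 0 := by simp [b₀, Pi.single_eq_zero_iff]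
  -- `e` is the dual of the component `⟨b₀, F⟩`; as it is not affine, `1` lies in the span
  have hone : codewordMap F (1, 0, 0) ∈ S := by
    choose e he using fun a => hF.exists_codeword_mem_minWeightWords hn a hb₀
    obtain ⟨a₁, a₂, hne⟩ := exists_map_add_ne_of_sgn_mul_walsh_eq (by omega) fun a =>
      (codeword_mem_minWeightWords_iff hn F (e a) a b₀).1 (he a)
    have hw : ∀ a, codewordMap F (e a, a, b₀) ∈ S := fun a => Submodule.subset_span (he a)
    set d := e a₁ + e a₂ - e (a₁ + a₂) - e 0
    have hd : d ≠ 0 := fun h => hne (by linear_combination -h)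
    have hcomb : ((1, 0, 0) : ZMod 2 × BV n × BV m) =
        d⁻¹ • ((e a₁, a₁, b₀) + (e a₂, a₂, b₀) - (e (a₁ + a₂), a₁ + a₂, b₀) -
          (e 0, 0, b₀)) := by
      ext <;> simp [d, inv_mul_cancel₀ hd]
    rw [hcomb, map_smul, map_sub, map_sub, map_add]
    exact S.smul_mem _ (S.sub_mem (S.sub_mem (S.add_mem (hw _) (hw _)) (hw _)) (hw _))
  have hshift : ∀ ε ε' a b,
      codewordMap F (ε', a, b) ∈ S → codewordMap F (ε, a, b) ∈ S := by
    intro ε ε' a b h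
    have : ((ε, a, b) : ZMod 2 × BV n × BV m) = (ε', a, b) + (ε - ε') • (1, 0, 0) := by
      ext <;> simp
    rw [this, map_add, map_smul]
    exact S.add_mem h (S.smul_mem _ hone)
  rintro _ ⟨⟨ε, a, b⟩, rfl⟩
  by_cases hb : b = 0
  · subst hb
    obtain ⟨e₁, h₁⟩ := hmin a hb₀
    obtain ⟨e₂, h₂⟩ := hmin 0 hb₀
    have hdiff :
        ((e₁ - e₂, a, 0) : ZMod 2 × BV n × BV m) = (e₁, a, b₀) - (e₂, 0, b₀) := by
      ext <;> simp
    refine hshift ε (e₁ - e₂) a 0 ?_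
    rw [hdiff, map_sub]
    exact S.sub_mem h₁ h₂
  · obtain ⟨ε', h⟩ := hmin a hb
    exact hshift ε ε' a b h

end MinimumWeightWords

section Designs
variable {n m : ℕ}

def supp (c : BV n → ZMod 2) : Set (BV n) := { x | c x = 1 }

lemma supp_injective : Injective (supp (n := n)) := fun _ _ h => funext fun x =>
  (by decide : ∀ s t : ZMod 2, (s = 1 ↔ t = 1) → s = t) _ _ (Set.ext_iff.1 h x)

lemma supp_comp_symm (c : BV n → ZMod 2) (π : BV n ≃ BV n) :
    supp (c ∘ π.symm) = π '' supp c := by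
  ext x
  simp [supp, π.image_eq_preimage_symm]

lemma wtc_comp_equiv (c : BV n → ZMod 2) (σ : BV n ≃ BV n) : wtc (c ∘ σ) = wtc c :=
  Finset.card_equiv σ fun x => by simp

lemma blocks_eq_image_supp (F : BV n → BV m) : blocks F = supp '' minWeightWords F := by
  ext B
  simp [blocks, minWeightWords, supp, eq_comm, and_assoc]

lemma blocks_eq_image_iff {F F' : BV n → BV m} (π : BV n ≃ BV n) :
    blocks F = (π '' ·) '' blocks F' ↔
      minWeightWords F = (· ∘ π.symm) '' minWeightWords F' := by
  have himage : (π '' ·) '' (supp '' minWeightWords F') =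
      supp '' ((· ∘ π.symm) '' minWeightWords F') := by
    simp only [Set.image_image, supp_comp_symm]
  rw [blocks_eq_image_supp, blocks_eq_image_supp, himage,
    (Set.image_injective.2 supp_injective).eq_iff]

lemma minWeightWords_eq_image_comp_iff {F F' : BV n → BV m} (hF : IsBent F) (hF' : IsBent F')
    (hn : 2 ≤ n) (hm : 0 < m) (σ : BV n ≃ BV n) :
    minWeightWords F = (· ∘ σ) '' minWeightWords F' ↔ code F = (· ∘ σ) '' code F' := by
  let Φ := LinearMap.funLeft (ZMod 2) (ZMod 2) σ
  have hΦ : ⇑Φ = (· ∘ σ) := rfl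
  constructor
  · intro h
    rw [← coe_range_codewordMap, ← coe_range_codewordMap, ← hF.span_minWeightWords hn hm,
      ← hF'.span_minWeightWords hn hm, h, ← hΦ, Submodule.span_image, Submodule.map_coe]
  · intro h
    ext c
    rw [minWeightWords, Set.mem_ofPred_eq, h]
    constructor
    · rintro ⟨⟨c', hc', rfl⟩, hw⟩
      exact ⟨c', ⟨hc', by rwa [wtc_comp_equiv] at hw⟩, rfl⟩
    · rintro ⟨c', ⟨hc', hw⟩, rfl⟩
      exact ⟨⟨c', hc', rfl⟩, by rwa [wtc_comp_equiv]⟩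

end Designs

section Affine
variable {n m : ℕ}

lemma isAffineF_iff {A : BV n → BV m} :
    IsAffineF A ↔ ∃ f : BV n →ᵃ[ZMod 2] BV m, ⇑f = A := by
  constructor
  · rintro ⟨L, t, h⟩
    exact ⟨L.toAffineMap + AffineMap.const (ZMod 2) (BV n) t, funext fun x => by simp [h]⟩
  · rintro ⟨f, rfl⟩
    exact ⟨f.linear, f 0, fun x => congrFun f.decomp x⟩

lemma exists_affineMap_of_forall_coord {A : BV n → BV m}
    (h : ∀ j, ∃ f : BV n →ᵃ[ZMod 2] ZMod 2, ∀ x, A x j = f x) :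
    ∃ g : BV n →ᵃ[ZMod 2] BV m, ⇑g = A := by
  choose f hf using h
  exact ⟨AffineMap.pi f, funext fun x => funext fun j => (hf j x).symm⟩

lemma AffineMap.exists_eq_add_bdot (f : BV n →ᵃ[ZMod 2] ZMod 2) :
    ∃ δ u, ∀ x, f x = δ + bdot u x := by
  obtain ⟨u, hu⟩ := exists_bdot_eq f.linear
  exact ⟨f 0, u, fun x => (congrFun f.decomp x).trans ((hu x).symm ▸ add_comm _ _)⟩

lemma mem_code_iff {F : BV n → BV m} {c : BV n → ZMod 2} :
    c ∈ code F ↔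
      ∃ (f : BV n →ᵃ[ZMod 2] ZMod 2) (b : BV m), ∀ x, c x = f x + bdot b (F x) := by
  constructor
  · rintro ⟨ε, a, b, rfl⟩
    refine ⟨AffineMap.const (ZMod 2) (BV n) ε + (dotProductEquiv (ZMod 2) (Fin n) a).toAffineMap,
      b, fun x => ?_⟩
    simp [codeword, bdot_eq_dotProduct]
  · rintro ⟨f, b, hc⟩
    obtain ⟨δ, u, hf⟩ := f.exists_eq_add_bdot
    exact ⟨δ, u, b, funext fun x => by rw [hc, hf, codeword]⟩

lemma eaEquiv_iff {F F' : BV n → BV m} :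
    EAequiv F F' ↔ ∃ (A₁ : BV m ≃ₗ[ZMod 2] BV m) (σ : BV n ≃ᵃ[ZMod 2] BV n)
      (A₃ : BV n →ᵃ[ZMod 2] BV m), ∀ x, F x = A₁ (F' (σ x)) + A₃ x := by
  constructor
  · rintro ⟨A₁, A₂, A₃, hA₁, hA₂, hA₂bij, hA₃, h⟩
    obtain ⟨σ, rfl⟩ := isAffineF_iff.1 hA₂
    obtain ⟨g, rfl⟩ := isAffineF_iff.1 hA₃
    exact ⟨LinearEquiv.ofBijective A₁ hA₁, AffineEquiv.ofBijective hA₂bij, g, h⟩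
  · rintro ⟨A₁, σ, A₃, h⟩
    exact ⟨A₁, σ, A₃, A₁.bijective, isAffineF_iff.2 ⟨σ, rfl⟩, σ.bijective,
      isAffineF_iff.2 ⟨A₃, rfl⟩, h⟩

lemma code_subset_image_comp {F F' : BV n → BV m} (A₁ : BV m →ₗ[ZMod 2] BV m)
    (σ : BV n ≃ᵃ[ZMod 2] BV n) (A₃ : BV n →ᵃ[ZMod 2] BV m)
    (h : ∀ x, F x = A₁ (F' (σ x)) + A₃ x) :
    code F ⊆ (· ∘ σ) '' code F' := by
  intro c hc
  obtain ⟨f, b, hc⟩ := mem_code_iff.1 hc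
  let φ := dotProductEquiv (ZMod 2) (Fin m) b
  obtain ⟨b', hb'⟩ := exists_bdot_eq (φ ∘ₗ A₁)
  let g := (f + φ.toAffineMap.comp A₃).comp σ.symm.toAffineMap
  refine ⟨fun y => g y + bdot b' (F' y), mem_code_iff.2 ⟨g, b', fun _ => rfl⟩,
    funext fun x => ?_⟩
  simp only [comp_apply, hc, h, bdot_add_right, ← hb']
  simp only [g, φ, AffineMap.coe_comp, AffineMap.coe_add, LinearMap.coe_toAffineMap,
    AffineEquiv.coe_toAffineMap, comp_apply, AffineEquiv.symm_apply_apply, Pi.add_apply,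
    dotProductEquiv_apply_apply, LinearMap.coe_comp, bdot_eq_dotProduct]
  ring

end Affine

section EquivalentCodes
variable {n m : ℕ}

lemma code_eq_image_comp {F F' : BV n → BV m} (A₁ : BV m ≃ₗ[ZMod 2] BV m)
    (σ : BV n ≃ᵃ[ZMod 2] BV n) (A₃ : BV n →ᵃ[ZMod 2] BV m)
    (h : ∀ x, F x = A₁ (F' (σ x)) + A₃ x) :
    code F = (· ∘ σ) '' code F' := by
  refine (code_subset_image_comp A₁.toLinearMap σ A₃ h).antisymm ?_
  rintro _ ⟨c', hc', rfl⟩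
  have h' : ∀ y, F' y = A₁.symm (F (σ.symm y)) +
      (-(A₁.symm.toLinearMap.toAffineMap.comp (A₃.comp σ.symm.toAffineMap))) y := by
    intro y
    simp [h, map_add]
  obtain ⟨c, hc, rfl⟩ := code_subset_image_comp A₁.symm.toLinearMap σ.symm _ h' hc'
  convert hc using 1
  funext x
  simp

def HasNoAffineComponent (F : BV n → BV m) : Prop :=
  ∀ (b : BV m) (f : BV n →ᵃ[ZMod 2] ZMod 2), (∀ x, bdot b (F x) = f x) → b = 0

lemma HasNoAffineComponent.comp {F : BV n → BV m} (hF : HasNoAffineComponent F)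
    (σ : BV n ≃ᵃ[ZMod 2] BV n) : HasNoAffineComponent (F ∘ σ) := fun b f h =>
  hF b (f.comp σ.symm.toAffineMap) fun y => by simpa using h (σ.symm y)

lemma HasNoAffineComponent.eq_of_add_bdot_eq {F : BV n → BV m} (hF : HasNoAffineComponent F)
    {b b' : BV m} (f g : BV n →ᵃ[ZMod 2] ZMod 2)
    (h : ∀ x, f x + bdot b (F x) = g x + bdot b' (F x)) :
    b = b' :=
  sub_eq_zero.1 <| hF _ (g - f) fun x => by
    rw [bdot_sub_left, AffineMap.coe_sub, Pi.sub_apply]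
    linear_combination h x

lemma IsBent.abs_sum_sgn_add_bdot {F : BV n → BV m} (hF : IsBent F)
    (f : BV n →ᵃ[ZMod 2] ZMod 2) {b : BV m} (hb : b ≠ 0) :
    |∑ x, sgn (f x + bdot b (F x))| = 2 ^ (n / 2) := by
  obtain ⟨δ, u, hf⟩ := f.exists_eq_add_bdot
  have hsum : ∑ x, sgn (f x + bdot b (F x)) = sgn δ * walsh F u b := by
    rw [← sum_sgn_codeword]
    simp only [hf, codeword]
  rw [hsum, abs_mul, abs_sgn, one_mul]
  rcases hF u b hb with h | h <;> simp [h]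

lemma IsBent.hasNoAffineComponent {F : BV n → BV m} (hF : IsBent F) (hn : 0 < n) :
    HasNoAffineComponent F := by
  intro b f h
  by_contra hb
  have habs := hF.abs_sum_sgn_add_bdot f hb
  simp only [h, CharTwo.add_self_eq_zero, sgn_zero, Finset.sum_const, Finset.card_univ, card_BV,
    nsmul_eq_mul, mul_one] at habs
  have := two_pow_div_two_lt hn
  push_cast at habs
  rw [abs_of_pos (by positivity)] at habs
  linarith

end EquivalentCodes

section Reverse
variable {n m : ℕ}

lemma exists_linearEquiv_bdot_apply_eq (β : BV m ≃ₗ[ZMod 2] BV m) :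
    ∃ A : BV m ≃ₗ[ZMod 2] BV m, ∀ b y, bdot b (A y) = bdot (β b) y := by
  let e := dotProductEquiv (ZMod 2) (Fin m)
  refine ⟨e.trans (β.dualMap.trans e.symm), fun b y => ?_⟩
  rw [bdot_eq_dotProduct, dotProduct_comm]
  change e (e.symm (β.dualMap (e y))) b = _
  rw [e.apply_symm_apply]
  simp [e, bdot_eq_dotProduct, dotProduct_comm]

lemma exists_eq_linearEquiv_comp_add_of_code_eq {F G : BV n → BV m} (hF : HasNoAffineComponent F)
    (hG : HasNoAffineComponent G) (h : code F = code G) :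
    ∃ (A₁ : BV m ≃ₗ[ZMod 2] BV m) (A₃ : BV n →ᵃ[ZMod 2] BV m),
      ∀ x, F x = A₁ (G x) + A₃ x := by
  have hrep : ∀ b : BV m, ∃ (f : BV n →ᵃ[ZMod 2] ZMod 2) (b' : BV m),
      ∀ x, bdot b (F x) = f x + bdot b' (G x) := by
    intro b
    have hb : codeword F 0 0 b ∈ code G := h ▸ ⟨0, 0, b, rfl⟩
    simpa [codeword] using mem_code_iff.1 hb
  choose f β hβ using hrep
  have hadd : ∀ b₁ b₂, β (b₁ + b₂) = β b₁ + β b₂ := fun b₁ b₂ =>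
    hG.eq_of_add_bdot_eq (f (b₁ + b₂)) (f b₁ + f b₂) fun x => by
      rw [← hβ, bdot_add_left, hβ, hβ, bdot_add_left, AffineMap.coe_add, Pi.add_apply]
      ring
  let βL := (AddMonoidHom.mk' β hadd).toZModLinearMap 2
  have hinj : Injective βL := (injective_iff_map_eq_zero βL).2 fun b hb =>
    have hβb : β b = 0 := hb
    hF b (f b) fun x => by simpa [hβb] using hβ b x
  obtain ⟨A₁, hA₁⟩ :=
    exists_linearEquiv_bdot_apply_eq (LinearEquiv.ofInjectiveEndo βL hinj)
  have hA₃ : ∃ A₃ : BV n →ᵃ[ZMod 2] BV m, ⇑A₃ = fun x => F x - A₁ (G x) := by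
    refine exists_affineMap_of_forall_coord fun j => ⟨f (Pi.single j 1), fun x => ?_⟩
    have hFj := hβ (Pi.single j 1) x
    have hAj := hA₁ (Pi.single j 1) (G x)
    simp only [bdot_single_one_left] at hFj hAj
    simp [hFj, hAj, βL]
  obtain ⟨A₃, hA₃⟩ := hA₃
  exact ⟨A₁, A₃, fun x => by rw [hA₃]; exact (add_sub_cancel _ _).symm⟩

lemma IsBent.exists_affineMap_eq_of_coord_mem_code {F : BV n → BV m} (hF : IsBent F)
    (σ : BV n ≃ BV n) (h : ∀ j, (fun x => σ x j) ∈ code F) :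
    ∃ g : BV n →ᵃ[ZMod 2] BV n, ⇑g = σ := by
  refine exists_affineMap_of_forall_coord fun j => ?_
  obtain ⟨f, b, hf⟩ := mem_code_iff.1 (h j)
  obtain rfl : b = 0 := by
    by_contra hb
    have hbalanced : ∑ x, sgn (σ x j) = 0 := by
      rw [Equiv.sum_comp σ (fun y => sgn (y j))]
      simpa [Pi.single_eq_zero_iff] using sum_sgn_bdot (Pi.single j (1 : ZMod 2))
    have habs := hF.abs_sum_sgn_add_bdot f hb
    simp only [← hf, hbalanced, abs_zero] at habs
    exact (pow_pos two_pos _).ne habs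
  exact ⟨f, fun x => by simpa using hf x⟩

theorem IsBent.eaEquiv_of_code_eq_image_comp {F F' : BV n → BV m} (hF : IsBent F)
    (hF' : IsBent F') (hn : 0 < n) (σ : BV n ≃ BV n) (h : code F = (· ∘ σ) '' code F') :
    EAequiv F F' := by
  obtain ⟨g, hg⟩ := hF.exists_affineMap_eq_of_coord_mem_code σ fun j =>
    h ▸ ⟨codeword F' 0 (Pi.single j 1) 0, ⟨0, _, 0, rfl⟩,
      funext fun x => by simp [codeword]⟩
  let τ := AffineEquiv.ofBijective (φ := g) (hg ▸ σ.bijective)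
  have hτ : ⇑τ = σ := hg
  have hcode : code F = code (F' ∘ τ) := by
    rw [h, code_eq_image_comp (F := F' ∘ τ) (F' := F') (LinearEquiv.refl _ _) τ 0
      fun x => by simp, hτ]
  obtain ⟨A₁, A₃, hA⟩ := exists_eq_linearEquiv_comp_add_of_code_eq
    (hF.hasNoAffineComponent hn) ((hF'.hasNoAffineComponent hn).comp τ) hcode
  exact eaEquiv_iff.2 ⟨A₁, τ, A₃, hA⟩

end Reverse

theorem eaEquiv_iff_exists_code_eq_image_comp {n m : ℕ} {F F' : BV n → BV m} (hF : IsBent F)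
    (hF' : IsBent F') (hn : 0 < n) :
    EAequiv F F' ↔ ∃ σ : BV n ≃ BV n, code F = (· ∘ σ) '' code F' := by
  constructor
  · intro h
    obtain ⟨A₁, σ, A₃, h⟩ := eaEquiv_iff.1 h
    exact ⟨σ.toEquiv, code_eq_image_comp A₁ σ A₃ h⟩
  · rintro ⟨σ, h⟩
    exact hF.eaEquiv_of_code_eq_image_comp hF' hn σ h

theorem ea_equiv_iff_addition_designs_isomorphic_general
    {n m : ℕ} (hn : 2 ≤ n) (hm1 : 1 ≤ m)
    (F F' : BV n → BV m) (hF : IsBent F) (hF' : IsBent F') :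
    EAequiv F F' ↔
      ∃ π : BV n ≃ BV n, blocks F = (fun B => π '' B) '' blocks F' := by
  rw [eaEquiv_iff_exists_code_eq_image_comp hF hF' (by omega)]
  simp_rw [blocks_eq_image_iff, minWeightWords_eq_image_comp_iff hF hF' hn hm1]
  exact Equiv.symm_bijective.surjective.exists

/-- Two `(n,m)`-bent functions are extended-affine equivalent if and only if their addition
designs are isomorphic. -/
theorem ea_equiv_iff_addition_designs_isomorphic
    {n m : ℕ} (hn : 2 ≤ n) (hev : Even n) (hm1 : 1 ≤ m) (hm2 : m ≤ n / 2)
    (F F' : BV n → BV m) (hF : IsBent F) (hF' : IsBent F') :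
    EAequiv F F' ↔
      ∃ π : BV n ≃ BV n, blocks F = (fun B => π '' B) '' blocks F' :=
  ea_equiv_iff_addition_designs_isomorphic_general hn hm1 F F' hF hF'
end

section
/- Let n ≥ 2 be even, m ≥ 1, and let F : 𝔽₂ⁿ → 𝔽₂ᵐ be a bent function. Then C(F) is a [2ⁿ, n+m+1, 2^{n−1} − 2^{n/2−1}] linear code: the map (ε, a, b) ↦ (x ↦ ε ⊕ ⟨a,x⟩ ⊕ ⟨b,F(x)⟩) from 𝔽₂ × 𝔽₂ⁿ × 𝔽₂ᵐ to 𝔽₂^{𝔽₂ⁿ} is injective (so C(F) has 𝔽₂-dimension n+m+1), and the minimum weight of a nonzero codeword of C(F) equals 2^{n−1} − 2^{n/2−1}. -/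
open Finset Function

/-! Codeword weights are read off from character sums:
`2 · wt(ε + ⟨a,·⟩ + ⟨b,F·⟩) = 2ⁿ − (−1)^ε W_F(a,b)`. For `b ≠ 0` bentness gives
`|W_F(a,b)| = 2^{n/2}`; for `b = 0` the Walsh coefficient is `0` (if `a ≠ 0`) or `2ⁿ`. Hence every
nonzero parameter `(ε,a,b)` yields weight at least `2^{n−1} − 2^{n/2−1}`, attained for `a = 0`
and a suitable `ε`. Since this bound is positive and the parametrization is additive, it is
injective. -/

lemma neg_one_pow_val_add (u v : ZMod 2) :
    (-1 : ℤ) ^ (u + v).val = (-1) ^ u.val * (-1) ^ v.val := by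
  revert u v; decide

lemma neg_one_pow_val (u : ZMod 2) : (-1 : ℤ) ^ u.val = if u = 1 then -1 else 1 := by
  revert u; decide

lemma ZMod.eq_one_of_ne_zero_two {u : ZMod 2} (hu : u ≠ 0) : u = 1 := by
  revert u; decide

lemma sum_neg_one_pow_eq_two_pow_sub_wtc {n : ℕ} (c : BV n → ZMod 2) :
    ∑ x, (-1 : ℤ) ^ (c x).val = 2 ^ n - 2 * wtc c := by
  have hsplit := Finset.card_filter_add_card_filter_not (s := univ) (fun x : BV n => c x = 1)
  rw [card_univ, Fintype.card_fun, ZMod.card, Fintype.card_fin] at hsplit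
  zify at hsplit
  simp only [neg_one_pow_val, sum_ite, sum_const, smul_neg, nsmul_eq_mul, mul_one, wtc]
  omega

lemma sum_neg_one_pow_bdot_eq_zero {n : ℕ} {a : BV n} (ha : a ≠ 0) :
    ∑ x, (-1 : ℤ) ^ (bdot a x).val = 0 := by
  obtain ⟨i, hi⟩ := Function.ne_iff.mp ha
  let ψ : AddChar (BV n) ℤ :=
    (AddChar.zmodChar 2 (by norm_num : (-1 : ℤ) ^ 2 = 1)).compAddMonoidHom
      (AddMonoidHom.mk' (bdot a) (dotProduct_add a))
  refine AddChar.sum_eq_zero_of_ne_one (ψ := ψ) (AddChar.ne_one_iff.2 ⟨Pi.single i 1, ?_⟩)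
  have hψ : ψ (Pi.single i 1) = (-1) ^ (a i).val := by
    change (-1) ^ (bdot a (Pi.single i 1)).val = _
    rw [bdot, ← dotProduct, dotProduct_single, mul_one]
  rw [hψ, ZMod.eq_one_of_ne_zero_two hi]
  decide

lemma codeword_zero {n m : ℕ} (F : BV n → BV m) : codeword F 0 0 0 = 0 := by
  ext x; simp [codeword, bdot]

lemma codeword_sub {n m : ℕ} (F : BV n → BV m) (ε ε' : ZMod 2) (a a' : BV n) (b b' : BV m) :
    codeword F ε a b - codeword F ε' a' b' = codeword F (ε - ε') (a - a') (b - b') := by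
  ext x; simp only [codeword, Pi.sub_apply, bdot, sub_mul, sum_sub_distrib]; ring

lemma sum_neg_one_pow_codeword {n m : ℕ} (F : BV n → BV m) (ε : ZMod 2) (a : BV n) (b : BV m) :
    ∑ x, (-1 : ℤ) ^ (codeword F ε a b x).val = (-1) ^ ε.val * walsh F a b := by
  rw [walsh, mul_sum]
  refine sum_congr rfl fun x _ => ?_
  rw [codeword, add_assoc, add_comm (bdot a x), neg_one_pow_val_add]

lemma two_mul_wtc_codeword {n m : ℕ} (F : BV n → BV m) (ε : ZMod 2) (a : BV n) (b : BV m) :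
    2 * (wtc (codeword F ε a b) : ℤ) = 2 ^ n - (-1) ^ ε.val * walsh F a b := by
  linarith [sum_neg_one_pow_eq_two_pow_sub_wtc (codeword F ε a b), sum_neg_one_pow_codeword F ε a b]

lemma walsh_zero_right {n m : ℕ} (F : BV n → BV m) (a : BV n) :
    walsh F a 0 = ∑ x, (-1 : ℤ) ^ (bdot a x).val := by
  simp [walsh, bdot]

lemma sign_mul_walsh_le {n m : ℕ} {F : BV n → BV m} (hF : IsBent F) {ε : ZMod 2} {a : BV n}
    {b : BV m} (h : (ε, a, b) ≠ 0) : (-1) ^ ε.val * walsh F a b ≤ 2 ^ (n / 2) := by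
  by_cases hb : b = 0
  · subst hb
    by_cases ha : a = 0
    · subst ha
      have hε : ε = 1 := ZMod.eq_one_of_ne_zero_two fun h0 => h (by simp [h0])
      have hw : walsh F 0 0 = 2 ^ n := by simp [walsh_zero_right, bdot]
      rw [hε, hw, ZMod.val_one, pow_one, neg_one_mul]
      exact (neg_nonpos.2 (by positivity)).trans (by positivity)
    · simp [walsh_zero_right, sum_neg_one_pow_bdot_eq_zero ha]
  · calc (-1) ^ ε.val * walsh F a b ≤ |(-1) ^ ε.val * walsh F a b| := le_abs_self _
      _ = 2 ^ (n / 2) := by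
        rcases hF a b hb with hw | hw <;> simp [abs_mul, hw]

lemma two_pow_sub_le_two_mul_wtc {n m : ℕ} {F : BV n → BV m} (hF : IsBent F) {ε : ZMod 2}
    {a : BV n} {b : BV m} (h : (ε, a, b) ≠ 0) :
    2 ^ n - 2 ^ (n / 2) ≤ 2 * (wtc (codeword F ε a b) : ℤ) := by
  linarith [two_mul_wtc_codeword F ε a b, sign_mul_walsh_le hF h]

lemma codeword_injective {n m : ℕ} (hn : 1 ≤ n) {F : BV n → BV m} (hF : IsBent F) :
    Injective (fun p : ZMod 2 × BV n × BV m => codeword F p.1 p.2.1 p.2.2) := by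
  rintro ⟨ε, a, b⟩ ⟨ε', a', b'⟩ h
  by_contra hne
  have hsub : (ε - ε', a - a', b - b') ≠ 0 := by
    simpa [Prod.ext_iff, sub_eq_zero] using hne
  have hwt := two_pow_sub_le_two_mul_wtc hF hsub
  rw [← codeword_sub, sub_eq_zero.mpr h, show wtc (0 : BV n → ZMod 2) = 0 by simp [wtc]] at hwt
  have : (2 : ℤ) ^ (n / 2) < 2 ^ n := pow_lt_pow_right₀ one_lt_two (by omega)
  push_cast at hwt
  linarith

lemma exists_sign_mul_walsh_eq {n m : ℕ} {F : BV n → BV m} (hF : IsBent F) (a : BV n) {b : BV m}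
    (hb : b ≠ 0) : ∃ ε : ZMod 2, (-1) ^ ε.val * walsh F a b = 2 ^ (n / 2) := by
  rcases hF a b hb with hw | hw
  · exact ⟨0, by simp [hw]⟩
  · exact ⟨1, by simp [hw, ZMod.val_one]⟩

lemma two_mul_minimumWeight {n : ℕ} (hn : 2 ≤ n) :
    2 * ((2 ^ (n - 1) - 2 ^ (n / 2 - 1) : ℕ) : ℤ) = 2 ^ n - 2 ^ (n / 2) := by
  obtain ⟨k, rfl⟩ : ∃ k, n = k + 1 := ⟨n - 1, by omega⟩
  obtain ⟨l, hl⟩ : ∃ l, (k + 1) / 2 = l + 1 := ⟨(k + 1) / 2 - 1, by omega⟩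
  have hle : 2 ^ l ≤ 2 ^ k := Nat.pow_le_pow_right two_pos (by omega)
  rw [hl, Nat.add_sub_cancel, Nat.add_sub_cancel, Nat.cast_sub hle]
  push_cast; ring

theorem code_of_bent_is_good_general
    {n m : ℕ} (hn : 2 ≤ n) (hm : 1 ≤ m)
    (F : BV n → BV m) (hF : IsBent F) :
    Function.Injective
        (fun p : ZMod 2 × BV n × BV m => codeword F p.1 p.2.1 p.2.2) ∧
      IsLeast { w : ℕ | ∃ c ∈ code F, c ≠ 0 ∧ wtc c = w }
        (2 ^ (n - 1) - 2 ^ (n / 2 - 1)) := by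
  have hinj := codeword_injective (by omega) hF
  have hmin := two_mul_minimumWeight hn
  refine ⟨hinj, ?_, ?_⟩
  · set b : BV m := Pi.single ⟨0, hm⟩ 1
    have hb : b ≠ 0 := by simp [b]
    obtain ⟨ε, hε⟩ := exists_sign_mul_walsh_eq hF 0 hb
    refine ⟨codeword F ε 0 b, ⟨ε, 0, b, rfl⟩, ?_, ?_⟩
    · rw [← codeword_zero F]
      exact hinj.ne (a₁ := (ε, 0, b)) (a₂ := (0, 0, 0)) (by simp [hb])
    · have hwt := two_mul_wtc_codeword F ε 0 b
      rw [hε, ← hmin] at hwt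
      exact_mod_cast (mul_left_cancel₀ two_ne_zero hwt)
  · rintro _ ⟨_, ⟨ε, a, b, rfl⟩, hc, rfl⟩
    have hp : (ε, a, b) ≠ 0 := by
      rintro ⟨⟩
      exact hc (codeword_zero F)
    have hwt := two_pow_sub_le_two_mul_wtc hF hp
    rw [← hmin] at hwt
    exact_mod_cast le_of_mul_le_mul_left hwt two_pos

/-- For an `(n,m)`-bent function `F`, the code `C(F)` is a
`[2ⁿ, n+m+1, 2^{n−1} − 2^{n/2−1}]` linear code: the parametrization of codewords by
`(ε, a, b)` is injective (so `C(F)` has dimension `n+m+1`), and the minimum weight of a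
nonzero codeword equals `2^{n−1} − 2^{n/2−1}`. -/
theorem code_of_bent_is_good
    {n m : ℕ} (hn : 2 ≤ n) (hev : Even n) (hm : 1 ≤ m)
    (F : BV n → BV m) (hF : IsBent F) :
    Function.Injective
        (fun p : ZMod 2 × BV n × BV m => codeword F p.1 p.2.1 p.2.2) ∧
      IsLeast { w : ℕ | ∃ c ∈ code F, c ≠ 0 ∧ wtc c = w }
        (2 ^ (n - 1) - 2 ^ (n / 2 - 1)) :=
  code_of_bent_is_good_general hn hm F hF
end

section
/- Let f, f' : 𝔽₂ⁿ → 𝔽₂ and h : 𝔽₂ᵏ → 𝔽₂ be Boolean functions. If there exist bijections π, σ : 𝔽₂ⁿ → 𝔽₂ⁿ with f(π(x) ⊕ σ(y)) = f'(x ⊕ y) for all x, y ∈ 𝔽₂ⁿ, then there exist bijections Π, Σ : 𝔽₂ⁿ × 𝔽₂ᵏ → 𝔽₂ⁿ × 𝔽₂ᵏ such that (f ⊕ h)(Π(x,w) ⊕ Σ(y,z)) = (f' ⊕ h)((x,w) ⊕ (y,z)) for all (x,w), (y,z) ∈ 𝔽₂ⁿ × 𝔽₂ᵏ, where the direct sum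 f ⊕ h : 𝔽₂ⁿ × 𝔽₂ᵏ → 𝔽₂ is defined by (f ⊕ h)(x,w) := f(x) ⊕ h(w). In other words, if the translation designs dev(D_f) and dev(D_{f'}) are isomorphic, then so are dev(D_{f⊕h}) and dev(D_{f'⊕h}). -/
open Function

/-- For Boolean `f, f'` on `𝔽₂ⁿ`: the translation designs of their supports are isomorphic. -/
def TranslationEquivalent {G R : Type*} [Add G] (f f' : G → R) : Prop :=
  ∃ π σ : G → G, Bijective π ∧ Bijective σ ∧ ∀ x y, f (π x + σ y) = f' (x + y)

namespace TranslationEquivalent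

variable {G H R : Type*} [Add G] [Add H]

theorem refl (f : G → R) : TranslationEquivalent f f :=
  ⟨id, id, bijective_id, bijective_id, fun _ _ => rfl⟩

theorem directSum [Add R] {f f' : G → R} {h h' : H → R}
    (hf : TranslationEquivalent f f') (hh : TranslationEquivalent h h') :
    TranslationEquivalent (fun p : G × H => f p.1 + h p.2) (fun p => f' p.1 + h' p.2) := by
  obtain ⟨π, σ, hπ, hσ, hfπσ⟩ := hf
  obtain ⟨π', σ', hπ', hσ', hhπσ⟩ := hh
  refine ⟨Prod.map π π', Prod.map σ σ', hπ.prodMap hπ', hσ.prodMap hσ', fun p q => ?_⟩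
  simp only [Prod.fst_add, Prod.snd_add, Prod.map_fst, Prod.map_snd, hfπσ, hhπσ]

end TranslationEquivalent

/-- If the translation designs `dev(D_f)` and `dev(D_{f'})` are isomorphic (i.e. there are
bijections `π, σ` of `𝔽₂ⁿ` with `f(π(x) ⊕ σ(y)) = f'(x ⊕ y)`), then for any Boolean
function `h` on `𝔽₂ᵏ`, the translation designs `dev(D_{f⊕h})` and `dev(D_{f'⊕h})` of the
direct sums `(f ⊕ h)(x,w) = f(x) ⊕ h(w)` are isomorphic. -/
theorem support_designs_of_direct_sums_isomorphic
    {n k : ℕ} (f f' : BV n → ZMod 2) (h : BV k → ZMod 2)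
    (hiso : ∃ π σ : BV n → BV n, Bijective π ∧ Bijective σ ∧
      ∀ x y : BV n, f (π x + σ y) = f' (x + y)) :
    ∃ P S : BV n × BV k → BV n × BV k, Bijective P ∧ Bijective S ∧
      ∀ p q : BV n × BV k,
        f ((P p + S q).1) + h ((P p + S q).2) = f' ((p + q).1) + h ((p + q).2) :=
  TranslationEquivalent.directSum hiso (.refl h)
end

section
/- Define f, f' : 𝔽₂¹⁰ → 𝔽₂ by f(x) = x₁x₆ ⊕ x₂x₇ ⊕ x₃x₈ ⊕ x₄x₉ ⊕ x₅x₁₀ ⊕ x₁x₂x₃x₄x₅ and f'(x) = f(x) ⊕ x₄ ⊕ x₆ ⊕ x₈ ⊕ x₁₀ ⊕ x₁x₂ ⊕ x₂x₃ ⊕ x₁x₂x₃ ⊕ x₂x₄x₅ ⊕ x₁x₂x₄x₅ ⊕ x₂x₃x₄x₅, and define π, σ : 𝔽₂¹⁰ → 𝔽₂¹⁰ by π(x) = (x₁, x₂, x₃, x₄, x₁⊕x₅, x₁⊕x₁₀⊕x₂x₃⊕x₅⊕x₆, x₁x₃⊕x₇, x₁x₂⊕x₈, x₉, x₁⊕x₁₀)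 and σ(y) = y ⊕ (1, 0, 1, 0, y₁, y₁⊕y₁₀⊕y₂⊕y₂y₃⊕y₅, y₁⊕y₃⊕y₁y₃, y₂⊕y₁y₂, 1, 1⊕y₁). Then π and σ are bijections of 𝔽₂¹⁰ and f(π(x) ⊕ σ(y)) = f'(x ⊕ y) for all x, y ∈ 𝔽₂¹⁰; consequently the translation designs dev(D_f) and dev(D_{f'}) are isomorphic. -/
/-!
`σ` is `π` conjugated by translations, `σ(y) = π(y + c) + d`, and `f ∘ σ = f'`. Moreover
`f(π x + π y + d) = f(π (x + y) + d)`: `π` is additive up to a bilinear defect that `f` does not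
see in characteristic 2. Hence `f(π x + σ y) = f(π (x + y + c) + d) = f(σ (x + y)) = f'(x + y)`.
-/

open Function

/-- `f(x) = x₁x₆ ⊕ x₂x₇ ⊕ x₃x₈ ⊕ x₄x₉ ⊕ x₅x₁₀ ⊕ x₁x₂x₃x₄x₅` (coordinates are 0-indexed). -/
def fMM (x : BV 10) : ZMod 2 :=
  x 0 * x 5 + x 1 * x 6 + x 2 * x 7 + x 3 * x 8 + x 4 * x 9 +
    x 0 * x 1 * x 2 * x 3 * x 4

/-- `f'(x) = f(x) ⊕ x₄ ⊕ x₆ ⊕ x₈ ⊕ x₁₀ ⊕ x₁x₂ ⊕ x₂x₃ ⊕ x₁x₂x₃ ⊕ x₂x₄x₅ ⊕ x₁x₂x₄x₅ ⊕ x₂x₃x₄x₅`. -/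
def fMM' (x : BV 10) : ZMod 2 :=
  fMM x + x 3 + x 5 + x 7 + x 9 + x 0 * x 1 + x 1 * x 2 +
    x 0 * x 1 * x 2 + x 1 * x 3 * x 4 + x 0 * x 1 * x 3 * x 4 + x 1 * x 2 * x 3 * x 4

/-- The permutation `π` of `𝔽₂¹⁰`. -/
def piMM (x : BV 10) : BV 10 :=
  ![x 0, x 1, x 2, x 3, x 0 + x 4,
    x 0 + x 9 + x 1 * x 2 + x 4 + x 5,
    x 0 * x 2 + x 6, x 0 * x 1 + x 7, x 8, x 0 + x 9]

/-- The permutation `σ` of `𝔽₂¹⁰`. -/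
def sigmaMM (y : BV 10) : BV 10 :=
  y + ![1, 0, 1, 0, y 0,
        y 0 + y 9 + y 1 + y 1 * y 2 + y 4,
        y 0 + y 2 + y 0 * y 2, y 1 + y 0 * y 1, 1, 1 + y 0]

def cMM : BV 10 := ![1, 0, 1, 0, 0, 0, 0, 0, 0, 0]

def dMM : BV 10 := ![0, 0, 0, 0, 1, 1, 1, 0, 1, 0]

theorem piMM_involutive : Involutive piMM := by
  intro x
  ext i
  fin_cases i <;>
    simp only [piMM, Fin.isValue, Fin.zero_eta, Fin.mk_one, Fin.reduceFinMk,
      Matrix.cons_val_zero, Matrix.cons_val_one, Matrix.cons_val] <;>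
    grind

theorem sigmaMM_eq (y : BV 10) : sigmaMM y = piMM (y + cMM) + dMM := by
  ext i
  fin_cases i <;>
    simp only [sigmaMM, piMM, cMM, dMM, Pi.add_apply, Fin.isValue, Fin.zero_eta, Fin.mk_one,
      Fin.reduceFinMk, Matrix.cons_val_zero, Matrix.cons_val_one, Matrix.cons_val] <;>
    grind

theorem sigmaMM_bijective : Bijective sigmaMM := by
  rw [show sigmaMM = (· + dMM) ∘ piMM ∘ (· + cMM) from funext sigmaMM_eq]
  exact (Equiv.addRight dMM).bijective.comp
    (piMM_involutive.bijective.comp (Equiv.addRight cMM).bijective)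

/- `π x + π y + π (x + y)` is `(x₁y₂ + x₂y₁, x₀y₂ + x₂y₀, x₀y₁ + x₁y₀)` in coordinates 5–7, which
`f` pairs with coordinates 0–2 of `x + y`; every resulting monomial `xᵢxⱼyₖ`, `xᵢyⱼyₖ` occurs
twice. -/
theorem fMM_piMM_add_piMM_add (x y w : BV 10) (h0 : w 0 = 0) (h1 : w 1 = 0) (h2 : w 2 = 0) :
    fMM (piMM x + piMM y + w) = fMM (piMM (x + y) + w) := by
  simp only [fMM, piMM, Pi.add_apply, Matrix.cons_val, h0, h1, h2]
  grind

theorem fMM_sigmaMM (z : BV 10) : fMM (sigmaMM z) = fMM' z := by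
  simp only [fMM, fMM', sigmaMM, Pi.add_apply, Matrix.cons_val]
  grind [ZMod.pow_card (z 0)]

theorem fMM_piMM_add_sigmaMM (x y : BV 10) : fMM (piMM x + sigmaMM y) = fMM' (x + y) :=
  calc fMM (piMM x + sigmaMM y)
      = fMM (piMM x + piMM (y + cMM) + dMM) := by rw [sigmaMM_eq, add_assoc]
    _ = fMM (piMM (x + y + cMM) + dMM) := by
      rw [fMM_piMM_add_piMM_add _ _ _ rfl rfl rfl, add_assoc]
    _ = fMM' (x + y) := by rw [← sigmaMM_eq, fMM_sigmaMM]

/-- `π` and `σ` are bijections of `𝔽₂¹⁰` satisfying `f(π(x) ⊕ σ(y)) = f'(x ⊕ y)` for all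
`x, y`; consequently the translation designs `dev(D_f)` and `dev(D_{f'})` are isomorphic. -/
theorem support_designs_of_fMM_fMM'_isomorphic :
    (Bijective piMM ∧ Bijective sigmaMM ∧
      ∀ x y : BV 10, fMM (piMM x + sigmaMM y) = fMM' (x + y)) ∧
    ∃ π σ : BV 10 → BV 10, Bijective π ∧ Bijective σ ∧
      ∀ x y : BV 10, fMM (π x + σ y) = fMM' (x + y) :=
  ⟨⟨piMM_involutive.bijective, sigmaMM_bijective, fMM_piMM_add_sigmaMM⟩,
    piMM, sigmaMM, piMM_involutive.bijective, sigmaMM_bijective, fMM_piMM_add_sigmaMM⟩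
end

section
/- Let n be even, m ≥ 1, let F, F' : 𝔽₂ⁿ → 𝔽₂ᵐ be extended-affine equivalent bent functions, and let G, G' : 𝔽₂ⁿ → 𝔽₂^{m+1} be extended-affine equivalent bent functions such that the first m coordinate functions of G form F and the first m coordinate functions of G' form F'. Then the sets { A : 𝔽₂^{m+1} → 𝔽₂ᵐ | A is a surjective 𝔽₂-linear map and A ∘ G is extended-affine equivalent to F } and { A : 𝔽₂^{m+1} → 𝔽₂ᵐ | A is a surjective 𝔽₂-linear map and A ∘ G' is extended-affine equivalent to F' } have the same cardinality. (This common cardinality equals |GL(m,2)| times the number |𝒮(F,G)| of (n,m)-bent spaces of G that are EA-equivalent to F, so |𝒮(F,G)| = |𝒮(F',G')|.) -/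
open Finset Function

/-- The `(n,m)`-function formed by the first `m` coordinate functions of an
`(n,m+1)`-function. -/
def truncateF {n m : ℕ} (G : BV n → BV (m + 1)) : BV n → BV m :=
  fun x i => G x i.castSucc

/-!
EA-equivalence is an equivalence relation, and an EA-equivalence `G = A₁ ∘ G' ∘ A₂ + A₃`
gives `A ∘ G ~ (A ∘ A₁) ∘ G'` for every linear `A`. Since also `F ~ F'`, precomposition with
the automorphism `A₁` maps the surjections of the first set bijectively onto those of the second.
-/

namespace IsAffineF

variable {n m p : ℕ}

theorem comp {A : BV n → BV m} {B : BV p → BV n} (hA : IsAffineF A) (hB : IsAffineF B) :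
    IsAffineF (A ∘ B) := by
  obtain ⟨L, t, hL⟩ := hA
  obtain ⟨M, s, hM⟩ := hB
  exact ⟨L ∘ₗ M, L s + t, fun x => by simp [hL, hM, add_assoc]⟩

theorem add {A B : BV n → BV m} (hA : IsAffineF A) (hB : IsAffineF B) :
    IsAffineF (fun x => A x + B x) := by
  obtain ⟨L, t, hL⟩ := hA
  obtain ⟨M, s, hM⟩ := hB
  exact ⟨L + M, t + s, fun _ => by simp only [hL, hM, LinearMap.add_apply]; abel⟩

theorem symm_ofBijective {A : BV n → BV n} (hA : IsAffineF A) (hbij : Bijective A) :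
    IsAffineF (Equiv.ofBijective A hbij).symm := by
  obtain ⟨L, t, hL⟩ := hA
  have hL_eq : ⇑L = (· - t) ∘ A := funext fun x => by simp [hL]
  have hL_bij : Bijective L := hL_eq ▸ (Equiv.subRight t).bijective.comp hbij
  set eL := LinearEquiv.ofBijective L hL_bij
  refine ⟨eL.symm.toLinearMap, -eL.symm t, fun y => ?_⟩
  rw [Equiv.symm_apply_eq, Equiv.ofBijective_apply, hL]
  have hL_eL (z : BV n) : L (eL.symm z) = z := eL.apply_symm_apply z
  simp [hL_eL]

end IsAffineF

theorem LinearMap.isAffineF {n m : ℕ} (L : BV n →ₗ[ZMod 2] BV m) : IsAffineF L :=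
  ⟨L, 0, fun _ => (add_zero _).symm⟩

namespace EAequiv

variable {n m k : ℕ}

theorem symm {F F' : BV n → BV m} (h : EAequiv F F') : EAequiv F' F := by
  obtain ⟨A₁, A₂, A₃, hA₁, hA₂, hA₂_bij, hA₃, hF⟩ := h
  set e₁ := LinearEquiv.ofBijective A₁ hA₁
  set e₂ := Equiv.ofBijective A₂ hA₂_bij
  refine ⟨e₁.symm.toLinearMap, e₂.symm, fun y => -e₁.symm (A₃ (e₂.symm y)), e₁.symm.bijective,
    hA₂.symm_ofBijective hA₂_bij, e₂.symm.bijective,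
    (-e₁.symm.toLinearMap).isAffineF.comp (hA₃.comp (hA₂.symm_ofBijective hA₂_bij)),
    fun y => ?_⟩
  have hF_y : F (e₂.symm y) = A₁ (F' y) + A₃ (e₂.symm y) := by
    rw [hF, Equiv.ofBijective_apply_symm_apply A₂ hA₂_bij]
  have he₁ : e₁.symm (A₁ (F' y)) = F' y := e₁.symm_apply_apply _
  simp [hF_y, he₁]

theorem trans {F₁ F₂ F₃ : BV n → BV m} (h₁₂ : EAequiv F₁ F₂) (h₂₃ : EAequiv F₂ F₃) :
    EAequiv F₁ F₃ := by
  obtain ⟨A₁, A₂, A₃, hA₁, hA₂, hA₂_bij, hA₃, hF₁⟩ := h₁₂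
  obtain ⟨B₁, B₂, B₃, hB₁, hB₂, hB₂_bij, hB₃, hF₂⟩ := h₂₃
  refine ⟨A₁ ∘ₗ B₁, B₂ ∘ A₂, fun x => A₁ (B₃ (A₂ x)) + A₃ x, hA₁.comp hB₁, hB₂.comp hA₂,
    hB₂_bij.comp hA₂_bij, (A₁.isAffineF.comp (hB₃.comp hA₂)).add hA₃, fun x => ?_⟩
  rw [hF₁, hF₂, map_add, LinearMap.comp_apply, add_assoc, comp_apply]

theorem congr {F₁ F₂ G₁ G₂ : BV n → BV m} (hF : EAequiv F₁ F₂) (hG : EAequiv G₁ G₂) :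
    EAequiv F₁ G₁ ↔ EAequiv F₂ G₂ :=
  ⟨fun h => hF.symm.trans (h.trans hG), fun h => hF.trans (h.trans hG.symm)⟩

theorem exists_linearEquiv_forall_comp {G G' : BV n → BV k} (h : EAequiv G G') :
    ∃ e : BV k ≃ₗ[ZMod 2] BV k, ∀ A : BV k →ₗ[ZMod 2] BV m,
      EAequiv (fun x => A (G x)) (fun x => A (e (G' x))) := by
  obtain ⟨A₁, A₂, A₃, hA₁, hA₂, hA₂_bij, hA₃, hG⟩ := h
  refine ⟨LinearEquiv.ofBijective A₁ hA₁, fun A => ⟨LinearMap.id, A₂, A ∘ A₃, bijective_id,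
    hA₂, hA₂_bij, A.isAffineF.comp hA₃, fun x => ?_⟩⟩
  simp [hG x]

end EAequiv

theorem card_bent_spaces_invariant_general
    {n m : ℕ}
    (F F' : BV n → BV m) (hFF' : EAequiv F F')
    (G G' : BV n → BV (m + 1)) (hGG' : EAequiv G G') :
    Nat.card {A : BV (m + 1) →ₗ[ZMod 2] BV m //
        Surjective A ∧ EAequiv (fun x => A (G x)) F} =
      Nat.card {A : BV (m + 1) →ₗ[ZMod 2] BV m //
        Surjective A ∧ EAequiv (fun x => A (G' x)) F'} := by
  obtain ⟨e, hG⟩ := hGG'.exists_linearEquiv_forall_comp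
  let precompE : (BV (m + 1) →ₗ[ZMod 2] BV m) ≃ (BV (m + 1) →ₗ[ZMod 2] BV m) :=
    (e.symm.arrowCongr (LinearEquiv.refl (ZMod 2) (BV m))).toEquiv
  refine Nat.card_congr (precompE.subtypeEquiv fun A => ?_)
  exact and_congr (EquivLike.surjective_comp e A).symm ((hG A).congr hFF')

/-- If `F, F'` are EA-equivalent `(n,m)`-bent functions and `G, G'` are EA-equivalent
`(n,m+1)`-bent functions whose first `m` coordinate functions form `F` resp. `F'`, then
the sets of surjective linear maps `A : 𝔽₂^{m+1} → 𝔽₂ᵐ` with `A ∘ G` EA-equivalent to `F`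
resp. `A ∘ G'` EA-equivalent to `F'` have the same cardinality (equivalently,
`|𝒮(F,G)| = |𝒮(F',G')|`). -/
theorem card_bent_spaces_invariant
    {n m : ℕ} (hev : Even n) (hm : 1 ≤ m)
    (F F' : BV n → BV m) (hF : IsBent F) (hF' : IsBent F') (hFF' : EAequiv F F')
    (G G' : BV n → BV (m + 1)) (hG : IsBent G) (hG' : IsBent G') (hGG' : EAequiv G G')
    (hFG : truncateF G = F) (hFG' : truncateF G' = F') :
    Nat.card {A : BV (m + 1) →ₗ[ZMod 2] BV m //
        Surjective A ∧ EAequiv (fun x => A (G x)) F} =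
      Nat.card {A : BV (m + 1) →ₗ[ZMod 2] BV m //
        Surjective A ∧ EAequiv (fun x => A (G' x)) F'} :=
  card_bent_spaces_invariant_general F F' hFF' G G' hGG'
end
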